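/- arXiv:2501.01605 — 2 statements merged into one kernel-verified Lean document; each statement's English description precedes it below -/
import Mathlib

section
/- In the Euclidean two-circle configuration with fixed Θ ∈ (0,π), the partial derivatives satisfy r_i · ∂θ_i/∂r_i = r_j · ∂θ_j/∂r_j = −d/l < 0; in particular θ_i is strictly decreasing in r_i and strictly increasing in r_j. -/
open Real

noncomputable def eL (Θ ri rj : ℝ) : ℝ := Real.sqrt (ri ^ 2 + rj ^ 2 + 2 * ri * rj * Real.cos Θ)

/-- Inner angle at vertex `i` of the Euclidean triangle with sides `ri, rj` from the apex
`τ*`, apex angle `π − Θ`, opposite side `eL Θ ri rj` (law of cosines). -/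
noncomputable def eθi (Θ ri rj : ℝ) : ℝ :=
  Real.arccos ((ri ^ 2 + (eL Θ ri rj) ^ 2 - rj ^ 2) / (2 * ri * eL Θ ri rj))

noncomputable def eθj (Θ ri rj : ℝ) : ℝ :=
  Real.arccos ((rj ^ 2 + (eL Θ ri rj) ^ 2 - ri ^ 2) / (2 * rj * eL Θ ri rj))

/-! The angle `θ_i` is the argument of `r_i + r_j e^{iΘ}`, whose imaginary part `r_j sin Θ` is
positive, so `θ_i = π/2 - arctan ((r_i + r_j cos Θ) / (r_j sin Θ))`. Strict monotonicity in
`r_i` and `r_j` is then read off from that of `arctan`, and the derivative in `r_i` is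
`-r_j sin Θ / l²`. The angle `θ_j` is `θ_i` with the roles of `r_i` and `r_j` exchanged. -/

theorem Real.arccos_div_sqrt_sq_add_sq {u v : ℝ} (hv : 0 < v) :
    arccos (u / √(u ^ 2 + v ^ 2)) = π / 2 - arctan (u / v) := by
  have hsqrt : √(u ^ 2 + v ^ 2) = v * √(1 + (u / v) ^ 2) := by
    rw [show u ^ 2 + v ^ 2 = v ^ 2 * (1 + (u / v) ^ 2) by field_simp; ring,
      sqrt_mul (sq_nonneg v), sqrt_sq hv.le]
  rw [arccos_eq_pi_div_two_sub_arcsin, arctan_eq_arcsin, hsqrt, ← div_div]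

lemma eL_comm (Θ a b : ℝ) : eL Θ a b = eL Θ b a := by
  unfold eL; ring_nf

lemma eL_eq_sqrt (Θ ri rj : ℝ) :
    eL Θ ri rj = √((ri + rj * cos Θ) ^ 2 + (rj * sin Θ) ^ 2) := by
  rw [eL]
  congr 1
  linear_combination rj ^ 2 * (sin_sq_add_cos_sq Θ).symm

lemma eL_sq (Θ ri rj : ℝ) :
    eL Θ ri rj ^ 2 = (ri + rj * cos Θ) ^ 2 + (rj * sin Θ) ^ 2 := by
  rw [eL_eq_sqrt, sq_sqrt (by positivity)]

lemma eL_pos {Θ ri rj : ℝ} (hΘ : 0 < sin Θ) (hj : 0 < rj) : 0 < eL Θ ri rj := by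
  rw [eL_eq_sqrt]
  positivity

lemma eθi_eq_pi_div_two_sub_arctan {Θ ri rj : ℝ} (hΘ : 0 < sin Θ) (hi : ri ≠ 0) (hj : 0 < rj) :
    eθi Θ ri rj = π / 2 - arctan ((ri + rj * cos Θ) / (rj * sin Θ)) := by
  have hL := (eL_pos (ri := ri) hΘ hj).ne'
  rw [← arccos_div_sqrt_sq_add_sq (by positivity), ← eL_eq_sqrt, eθi]
  congr 1
  field_simp
  linear_combination eL_sq Θ ri rj + rj ^ 2 * sin_sq_add_cos_sq Θ

lemma eθj_eq_eθi_swap (Θ ri rj : ℝ) : eθj Θ ri rj = eθi Θ rj ri := by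
  rw [eθj, eθi, eL_comm]

lemma hasDerivAt_eθi_left {Θ ri rj : ℝ} (hΘ : 0 < sin Θ) (hi : ri ≠ 0) (hj : 0 < rj) :
    HasDerivAt (fun x => eθi Θ x rj) (-(rj * sin Θ) / eL Θ ri rj ^ 2) ri := by
  have heq : (fun x => eθi Θ x rj) =ᶠ[nhds ri]
      fun x => π / 2 - arctan ((x + rj * cos Θ) / (rj * sin Θ)) := by
    filter_upwards [isOpen_ne.mem_nhds hi] with x hx
    exact eθi_eq_pi_div_two_sub_arctan hΘ hx hj
  refine ((((((hasDerivAt_id ri).add_const _).div_const _).arctan).const_sub _).congr_of_eventuallyEq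
    heq).congr_deriv ?_
  rw [id, eL_sq]
  field_simp
  ring

lemma strictAntiOn_eθi_left {Θ rj : ℝ} (hΘ : 0 < sin Θ) (hj : 0 < rj) :
    StrictAntiOn (fun x => eθi Θ x rj) (Set.Ioi 0) := by
  intro a ha b hb hab
  simp only [eθi_eq_pi_div_two_sub_arctan hΘ (ne_of_gt ha) hj,
    eθi_eq_pi_div_two_sub_arctan hΘ (ne_of_gt hb) hj]
  gcongr

lemma strictMonoOn_eθi_right {Θ ri : ℝ} (hΘ : 0 < sin Θ) (hi : 0 < ri) :
    StrictMonoOn (fun y => eθi Θ ri y) (Set.Ioi 0) := by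
  intro a ha b hb hab
  have hsplit : ∀ y : ℝ, 0 < y →
      (ri + y * cos Θ) / (y * sin Θ) = ri / (y * sin Θ) + cos Θ / sin Θ := by
    intro y hy
    field_simp
  simp only [eθi_eq_pi_div_two_sub_arctan hΘ hi.ne' ha, eθi_eq_pi_div_two_sub_arctan hΘ hi.ne' hb,
    hsplit a ha, hsplit b hb]
  gcongr
  exact mul_pos ha hΘ

theorem euclidean_angle_self_derivative
    (Θ : ℝ) (hΘ : Θ ∈ Set.Ioo 0 π) :
    (∀ ri rj : ℝ, 0 < ri → 0 < rj →
      ri * deriv (fun x => eθi Θ x rj) ri =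
        -(ri * rj * Real.sin Θ / eL Θ ri rj) / eL Θ ri rj ∧
      rj * deriv (fun y => eθj Θ ri y) rj =
        -(ri * rj * Real.sin Θ / eL Θ ri rj) / eL Θ ri rj ∧
      -(ri * rj * Real.sin Θ / eL Θ ri rj) / eL Θ ri rj < 0) ∧
    (∀ rj : ℝ, 0 < rj → StrictAntiOn (fun x => eθi Θ x rj) (Set.Ioi 0)) ∧
    (∀ ri : ℝ, 0 < ri → StrictMonoOn (fun y => eθi Θ ri y) (Set.Ioi 0)) := by
  have hs : 0 < sin Θ := sin_pos_of_pos_of_lt_pi hΘ.1 hΘ.2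
  refine ⟨fun ri rj hi hj => ⟨?_, ?_, ?_⟩, fun rj hj => strictAntiOn_eθi_left hs hj,
    fun ri hi => strictMonoOn_eθi_right hs hi⟩
  all_goals have hL := eL_pos (ri := ri) hs hj
  · rw [(hasDerivAt_eθi_left hs hi.ne' hj).deriv]
    field_simp
  · simp only [eθj_eq_eθi_swap]
    rw [(hasDerivAt_eθi_left hs hj.ne' hi).deriv, eL_comm]
    field_simp
  · rw [neg_div, neg_lt_zero]
    positivity
end

section
/- In the hyperbolic two-circle triangle, let Area = Θ − θ_i − θ_j denote its area (by Gauss–Bonnet). If cosh l > 2, then sinh r_i · ∂(Area − θ_j)/∂r_i > 0. -/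
/-! Differentiating the law-of-cosines formulas for the angles gives
`∂θ_j/∂r_i = sinh r_j sin Θ / sinh² l > 0` and `∂θ_i/∂r_i = -cosh l · ∂θ_j/∂r_i`.
Since `Area - θ_j = Θ - θ_i - 2 θ_j`, its `r_i`-derivative is `(cosh l - 2) · ∂θ_j/∂r_i`. -/

open Real

noncomputable def arcosh (x : ℝ) : ℝ := Real.log (x + Real.sqrt (x ^ 2 - 1))

/-- cosh of the side opposite the apex in the hyperbolic two-circle triangle. -/
noncomputable def hC (Θ ri rj : ℝ) : ℝ :=
  Real.cosh ri * Real.cosh rj + Real.sinh ri * Real.sinh rj * Real.cos Θ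

noncomputable def hL (Θ ri rj : ℝ) : ℝ := _root_.arcosh (hC Θ ri rj)

/-- Inner angle at vertex `i` of the hyperbolic triangle with side lengths `ri, rj`
adjacent to the apex angle `π − Θ`, via the hyperbolic law of cosines. -/
noncomputable def hθi (Θ ri rj : ℝ) : ℝ :=
  Real.arccos ((Real.cosh ri * Real.cosh (hL Θ ri rj) - Real.cosh rj) /
    (Real.sinh ri * Real.sinh (hL Θ ri rj)))

noncomputable def hθj (Θ ri rj : ℝ) : ℝ :=
  Real.arccos ((Real.cosh rj * Real.cosh (hL Θ ri rj) - Real.cosh ri) /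
    (Real.sinh rj * Real.sinh (hL Θ ri rj)))

/-- Area of the hyperbolic two-circle triangle by Gauss–Bonnet. -/
noncomputable def hArea (Θ ri rj : ℝ) : ℝ := Θ - hθi Θ ri rj - hθj Θ ri rj

theorem HasDerivAt.arccos_div {f g : ℝ → ℝ} {f' g' x : ℝ} (hf : HasDerivAt f f' x)
    (hg : HasDerivAt g g' x) (hfg : |f x| < g x) :
    HasDerivAt (fun y => arccos (f y / g y))
      (-(f' * g x - f x * g') / (g x * √(g x ^ 2 - f x ^ 2))) x := by
  have hg0 : 0 < g x := (abs_nonneg _).trans_lt hfg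
  have hsq : 0 < g x ^ 2 - f x ^ 2 := by nlinarith [sq_abs (f x), abs_nonneg (f x)]
  have hratio : |f x / g x| < 1 := by
    rwa [abs_div, abs_of_pos hg0, div_lt_one hg0]
  have hsqrt : √(1 - (f x / g x) ^ 2) = √(g x ^ 2 - f x ^ 2) / g x := by
    rw [div_pow, one_sub_div (by positivity), sqrt_div' _ (by positivity), sqrt_sq hg0.le]
  refine ((hasDerivAt_arccos (abs_lt.1 hratio).1.ne' (abs_lt.1 hratio).2.ne).comp x
    (hf.div hg hg0.ne')).congr_deriv ?_
  rw [hsqrt]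
  field_simp

theorem neg_one_lt_cos_of_sin_ne_zero {Θ : ℝ} (hΘ : sin Θ ≠ 0) : -1 < cos Θ := by
  nlinarith [sin_sq_add_cos_sq Θ, neg_one_le_cos Θ, cos_le_one Θ, sq_pos_of_ne_zero hΘ]

/-- `∂ (hC Θ ri rj) / ∂ ri`; by the law of cosines it equals `sinh l · cos θ_i`, and `hD Θ rj ri`
equals `sinh l · cos θ_j`. -/
noncomputable def hD (Θ ri rj : ℝ) : ℝ := sinh ri * cosh rj + cosh ri * sinh rj * cos Θ

section

variable {Θ ri rj : ℝ}

-- `_root_.arcosh` unfolds to Mathlib's `Real.arcosh`.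
theorem cosh_hL (h : 1 ≤ hC Θ ri rj) : cosh (hL Θ ri rj) = hC Θ ri rj := cosh_arcosh h

theorem sinh_hL (h : 1 ≤ hC Θ ri rj) : sinh (hL Θ ri rj) = √(hC Θ ri rj ^ 2 - 1) :=
  sinh_arcosh h

theorem hC_comm : hC Θ ri rj = hC Θ rj ri := by
  unfold hC; ring

theorem one_lt_hC (hri : 0 < ri) (hrj : 0 < rj) (hΘ : -1 < cos Θ) : 1 < hC Θ ri rj := by
  have hsinh : 0 < sinh ri * sinh rj := mul_pos (sinh_pos_iff.2 hri) (sinh_pos_iff.2 hrj)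
  have hdiff : 1 ≤ cosh (ri - rj) := one_le_cosh _
  rw [cosh_sub] at hdiff
  unfold hC
  nlinarith [mul_pos hsinh (show 0 < 1 + cos Θ by linarith)]

theorem cosh_mul_hC_sub_cosh : cosh ri * hC Θ ri rj - cosh rj = sinh ri * hD Θ ri rj := by
  unfold hC hD; linear_combination cosh rj * cosh_sq ri

theorem hC_sq_sub_one_sub_hD_sq : hC Θ ri rj ^ 2 - 1 - hD Θ ri rj ^ 2 = (sinh rj * sin Θ) ^ 2 := by
  unfold hC hD
  linear_combination (cosh rj ^ 2 - sinh rj ^ 2 * cos Θ ^ 2) * cosh_sq ri + cosh_sq rj -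
    sinh rj ^ 2 * sin_sq Θ

theorem abs_hD_lt (hrj : 0 < rj) (hΘ : sin Θ ≠ 0) :
    |hD Θ ri rj| < √(hC Θ ri rj ^ 2 - 1) := by
  rw [lt_sqrt (abs_nonneg _), sq_abs]
  have hlaw := hC_sq_sub_one_sub_hD_sq (Θ := Θ) (ri := ri) (rj := rj)
  have hpos : 0 < (sinh rj * sin Θ) ^ 2 := by positivity [(sinh_pos_iff.2 hrj).ne']
  linarith

theorem hθi_eq_arccos (hri : 0 < ri) (h : 1 ≤ hC Θ ri rj) :
    hθi Θ ri rj = arccos (hD Θ ri rj / √(hC Θ ri rj ^ 2 - 1)) := by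
  rw [hθi, cosh_hL h, sinh_hL h, cosh_mul_hC_sub_cosh,
    mul_div_mul_left _ _ (sinh_pos_iff.2 hri).ne']

theorem hθj_eq_hθi_swap : hθj Θ ri rj = hθi Θ rj ri := by
  rw [hθj, hθi, hL, hL, hC_comm]

theorem hasDerivAt_hC : HasDerivAt (fun x => hC Θ x rj) (hD Θ ri rj) ri := by
  unfold hC hD
  exact ((hasDerivAt_cosh ri).mul_const _).add ((hasDerivAt_sinh ri).mul_const _ |>.mul_const _)

theorem hasDerivAt_hD : HasDerivAt (fun x => hD Θ x rj) (hC Θ ri rj) ri := by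
  unfold hC hD
  exact ((hasDerivAt_sinh ri).mul_const _).add ((hasDerivAt_cosh ri).mul_const _ |>.mul_const _)

theorem hasDerivAt_hD_right :
    HasDerivAt (fun x => hD Θ rj x) (sinh rj * sinh ri + cosh rj * cosh ri * cos Θ) ri := by
  unfold hD
  exact (((hasDerivAt_cosh ri).const_mul _).add ((hasDerivAt_sinh ri).const_mul _ |>.mul_const _))

theorem hasDerivAt_sqrt_hC_sq_sub_one (h : 1 < hC Θ ri rj) :
    HasDerivAt (fun x => √(hC Θ x rj ^ 2 - 1))
      (hC Θ ri rj * hD Θ ri rj / √(hC Θ ri rj ^ 2 - 1)) ri := by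
  have hpos : hC Θ ri rj ^ 2 - 1 ≠ 0 := by nlinarith
  refine ((hasDerivAt_hC.fun_pow 2).sub_const 1 |>.sqrt hpos).congr_deriv ?_
  field_simp
  ring

theorem hasDerivAt_hθi (hri : 0 < ri) (hrj : 0 < rj) (hΘ : 0 < sin Θ) :
    HasDerivAt (fun x => hθi Θ x rj)
      (-(hC Θ ri rj * (sinh rj * sin Θ / (hC Θ ri rj ^ 2 - 1)))) ri := by
  have hC1 : 1 < hC Θ ri rj := one_lt_hC hri hrj (neg_one_lt_cos_of_sin_ne_zero hΘ.ne')
  have hq : 0 < hC Θ ri rj ^ 2 - 1 := by nlinarith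
  have heq : (fun x => hθi Θ x rj) =ᶠ[nhds ri]
      fun x => arccos (hD Θ x rj / √(hC Θ x rj ^ 2 - 1)) := by
    filter_upwards [eventually_gt_nhds hri] with x hx
    exact hθi_eq_arccos hx (one_lt_hC hx hrj (neg_one_lt_cos_of_sin_ne_zero hΘ.ne')).le
  refine ((hasDerivAt_hD.arccos_div (hasDerivAt_sqrt_hC_sq_sub_one hC1)
    (abs_hD_lt hrj hΘ.ne')).congr_of_eventuallyEq heq).congr_deriv ?_
  have hlaw := hC_sq_sub_one_sub_hD_sq (Θ := Θ) (ri := ri) (rj := rj)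
  have hq2 : √(hC Θ ri rj ^ 2 - 1) ^ 2 = hC Θ ri rj ^ 2 - 1 := sq_sqrt hq.le
  rw [hq2, hlaw, sqrt_sq (mul_pos (sinh_pos_iff.2 hrj) hΘ).le]
  have : 0 < √(hC Θ ri rj ^ 2 - 1) := sqrt_pos.2 hq
  field_simp
  rw [hq2]
  linear_combination (1 - hC Θ ri rj ^ 2) * hlaw

theorem hasDerivAt_hθj (hri : 0 < ri) (hrj : 0 < rj) (hΘ : 0 < sin Θ) :
    HasDerivAt (fun x => hθj Θ x rj) (sinh rj * sin Θ / (hC Θ ri rj ^ 2 - 1)) ri := by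
  have hC1 : 1 < hC Θ ri rj := one_lt_hC hri hrj (neg_one_lt_cos_of_sin_ne_zero hΘ.ne')
  have hq : 0 < hC Θ ri rj ^ 2 - 1 := by nlinarith
  have heq : (fun x => hθj Θ x rj) =ᶠ[nhds ri]
      fun x => arccos (hD Θ rj x / √(hC Θ x rj ^ 2 - 1)) := by
    filter_upwards [eventually_gt_nhds hri] with x hx
    have hCx : 1 < hC Θ rj x := one_lt_hC hrj hx (neg_one_lt_cos_of_sin_ne_zero hΘ.ne')
    rw [hθj_eq_hθi_swap, hθi_eq_arccos hrj hCx.le, hC_comm]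
  have habs : |hD Θ rj ri| < √(hC Θ ri rj ^ 2 - 1) := hC_comm (Θ := Θ) ▸ abs_hD_lt hri hΘ.ne'
  refine ((hasDerivAt_hD_right.arccos_div (hasDerivAt_sqrt_hC_sq_sub_one hC1)
    habs).congr_of_eventuallyEq heq).congr_deriv ?_
  have hlaw := hC_sq_sub_one_sub_hD_sq (Θ := Θ) (ri := rj) (rj := ri)
  rw [← hC_comm] at hlaw
  have hmixed : (sinh rj * sinh ri + cosh rj * cosh ri * cos Θ) * (hC Θ ri rj ^ 2 - 1) -
      hD Θ rj ri * (hC Θ ri rj * hD Θ ri rj) = -(sinh ri * sinh rj * sin Θ ^ 2) := by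
    unfold hC hD
    linear_combination (sinh ri * cosh rj ^ 2 * sinh rj * cos Θ ^ 2 -
        sinh ri * sinh rj ^ 3 * cos Θ ^ 2 + cosh ri * cosh rj ^ 3 * cos Θ -
        cosh ri * cosh rj * sinh rj ^ 2 * cos Θ) * cosh_sq ri +
      (sinh ri * sinh rj * cos Θ ^ 2 + cosh ri * cosh rj * cos Θ) * cosh_sq rj +
      sinh ri * sinh rj * sin_sq Θ
  have hq2 : √(hC Θ ri rj ^ 2 - 1) ^ 2 = hC Θ ri rj ^ 2 - 1 := sq_sqrt hq.le
  rw [hq2, hlaw, sqrt_sq (mul_pos (sinh_pos_iff.2 hri) hΘ).le]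
  have : 0 < √(hC Θ ri rj ^ 2 - 1) := sqrt_pos.2 hq
  field_simp
  rw [hq2]
  linear_combination (1 - hC Θ ri rj ^ 2) * hmixed

end

theorem hyperbolic_area_minus_angle_derivative_pos
    (ri rj Θ : ℝ) (hri : 0 < ri) (hrj : 0 < rj)
    (hΘ : Θ ∈ Set.Ioo 0 π)
    (hcosh : 2 < Real.cosh (hL Θ ri rj)) :
    0 < Real.sinh ri * deriv (fun x => hArea Θ x rj - hθj Θ x rj) ri := by
  have hsin : 0 < sin Θ := sin_pos_of_pos_of_lt_pi hΘ.1 hΘ.2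
  have hC1 : 1 < hC Θ ri rj := one_lt_hC hri hrj (neg_one_lt_cos_of_sin_ne_zero hsin.ne')
  rw [cosh_hL hC1.le] at hcosh
  have hθj' := hasDerivAt_hθj hri hrj hsin
  have hderiv : HasDerivAt (fun x => hArea Θ x rj - hθj Θ x rj)
      ((hC Θ ri rj - 2) * (sinh rj * sin Θ / (hC Θ ri rj ^ 2 - 1))) ri :=
    ((((hasDerivAt_const ri Θ).sub (hasDerivAt_hθi hri hrj hsin)).sub hθj').sub
      hθj').congr_deriv (by ring)
  have hq : 0 < hC Θ ri rj ^ 2 - 1 := by nlinarith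
  rw [hderiv.deriv]
  exact mul_pos (sinh_pos_iff.2 hri)
    (mul_pos (by linarith) (div_pos (mul_pos (sinh_pos_iff.2 hrj) hsin) hq))
end
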